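/- Let T(r,w) be a planted equidistant weighted rooted tree with V_2^{++}(T) = {v ∈ V(T) : δ⁺(v) ≥ 2} nonempty, and let L be the set of leaves of T. Then the restriction of the additive metric d_w to L × L is an ultrametric on L if and only if 2·dist(r, V_2^{++}(T)) ≥ dist(r, V_0^+(T)), where dist(r, A) = min{d_w(r,a) : a ∈ A} for a nonempty subset A of V(T). -/

import Mathlib

/-!
Measure depth by `d r ·`. For vertices `x`, `y` let `u` be their meet, the vertex common to the
paths from `r` to `x` and to `y` that is farthest from `r`; then the path from `x` to `y` runs
through `u`, so `d x y + 2 d(r, u) = d(r, x) + d(r, y)`. Among three vertices, the meets of the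
pairs `(x, z)` and `(z, y)` lie on the path to `z`, and the shallower of them is common to the paths
to `x` and `y`, hence no deeper than the meet of `x` and `y`. For leaves at the common depth `K`
this gives the strong triangle inequality, so on the leaves the only condition left is the one
through the root leaf `r`: `d x y ≤ K`, i.e. `K ≤ 2 d(r, u)` for the meet `u` of any two leaves.
Since `r` is a leaf, every such meet is a branching vertex, and every branching vertex is the
meet of two leaves below two of its children.
-/

open SimpleGraph

noncomputable section

variable {V : Type*}

/-- The degree of a vertex of a graph. -/
def vdeg (G : SimpleGraph V) (v : V) : ℕ := Nat.card (G.neighborSet v)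

/- The out-degree of a vertex `v` of the tree `G` rooted at `r`:
`δ⁺(v) = δ(v)` if `v = r` and `δ⁺(v) = δ(v) - 1` otherwise. -/
open Classical in
def outDeg (G : SimpleGraph V) (r v : V) : ℕ :=
  if v = r then vdeg G v else vdeg G v - 1

/-- `v` is a direct successor of `u` in the tree `G` rooted at `r`:
`u` and `v` are adjacent and `u` lies on the path joining `v` and `r`. -/
def DirectSucc (G : SimpleGraph V) (r u v : V) : Prop :=
  G.Adj u v ∧ ∃ p : G.Walk v r, p.IsPath ∧ u ∈ p.support

/-- A labeling `l` of the tree `G` rooted at `r` is monotone if `l⁻¹(0) = V₀⁺(T)`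
and `l v < l u` whenever `v` is a direct successor of `u`. -/
def MonotoneLabeling (G : SimpleGraph V) (r : V) (l : V → NNReal) : Prop :=
  (∀ v, l v = 0 ↔ outDeg G r v = 0) ∧
    ∀ u v, DirectSucc G r u v → l v < l u

/-- A weight `w` on the tree `G` rooted at `r` is equidistant if it is strictly positive
on the edges and there is a constant `K` such that for every `u ∈ V₀⁺(T)`, the sum of
the weights of the edges of the path joining `r` and `u` equals `K`. -/
def EquidistantWeight (G : SimpleGraph V) (r : V) (w : Sym2 V → NNReal) : Prop :=
  (∀ e ∈ G.edgeSet, 0 < w e) ∧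
    ∃ K : NNReal, ∀ u, outDeg G r u = 0 →
      ∀ p : G.Walk r u, p.IsPath → (p.edges.map w).sum = K

/-- `d` is a metric on the set `A`. -/
def IsMetricOn (d : V → V → NNReal) (A : Set V) : Prop :=
  (∀ x ∈ A, ∀ y ∈ A, (d x y = 0 ↔ x = y)) ∧
  (∀ x ∈ A, ∀ y ∈ A, d x y = d y x) ∧
  (∀ x ∈ A, ∀ y ∈ A, ∀ z ∈ A, d x y ≤ d x z + d z y)

/-- `d` is an ultrametric on the set `A`: a metric satisfying the strong triangle
inequality. -/
def IsUltrametricOn (d : V → V → NNReal) (A : Set V) : Prop :=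
  IsMetricOn d A ∧ ∀ x ∈ A, ∀ y ∈ A, ∀ z ∈ A, d x y ≤ max (d x z) (d z y)

open Walk

section Degree

variable {G : SimpleGraph V} {v : V}

lemma exists_adj_of_vdeg_pos (hv : 0 < vdeg G v) : ∃ a, G.Adj v a :=
  (Nat.card_pos_iff.1 hv).1.elim fun a ↦ ⟨a, a.2⟩

variable [Finite V]

lemma one_lt_vdeg_iff : 1 < vdeg G v ↔ ∃ a b, G.Adj v a ∧ G.Adj v b ∧ a ≠ b := by
  rw [vdeg, Nat.card_coe_set_eq, Set.one_lt_ncard_iff (Set.toFinite _)]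
  rfl

lemma two_lt_vdeg_iff :
    2 < vdeg G v ↔ ∃ a b c, G.Adj v a ∧ G.Adj v b ∧ G.Adj v c ∧ a ≠ b ∧ a ≠ c ∧ b ≠ c := by
  rw [vdeg, Nat.card_coe_set_eq, Set.two_lt_ncard_iff (Set.toFinite _)]
  rfl

lemma eq_of_vdeg_le_one {a b : V} (hv : vdeg G v ≤ 1) (ha : G.Adj v a) (hb : G.Adj v b) :
    a = b := by
  by_contra hab
  exact (one_lt_vdeg_iff.2 ⟨a, b, ha, hb, hab⟩).not_ge hv

end Degree

lemma outDeg_self (G : SimpleGraph V) (r : V) : outDeg G r r = vdeg G r :=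
  if_pos rfl

lemma outDeg_of_ne (G : SimpleGraph V) {r v : V} (hv : v ≠ r) :
    outDeg G r v = vdeg G v - 1 :=
  if_neg hv

section RootLeaf

variable {G : SimpleGraph V} {r v : V} (hr : vdeg G r = 1)
include hr

lemma outDeg_eq_zero_iff : outDeg G r v = 0 ↔ vdeg G v ≤ 1 ∧ v ≠ r := by
  rcases eq_or_ne v r with rfl | hvr
  · simp [outDeg_self, hr]
  · rw [outDeg_of_ne G hvr, and_iff_left hvr]
    omega

lemma two_le_outDeg_iff : 2 ≤ outDeg G r v ↔ 2 < vdeg G v ∧ v ≠ r := by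
  rcases eq_or_ne v r with rfl | hvr
  · simp [outDeg_self, hr]
  · rw [outDeg_of_ne G hvr, and_iff_left hvr]
    omega

end RootLeaf

namespace SimpleGraph

variable {G : SimpleGraph V}

lemma IsTree.eq_of_isPath (hG : G.IsTree) {u v : V} {p q : G.Walk u v} (hp : p.IsPath)
    (hq : q.IsPath) : p = q :=
  (hG.existsUnique_path u v).unique hp hq

lemma IsTree.eq_of_mem_support_of_isPath_cons (hG : G.IsTree) {u a b x y c : V}
    {ha : G.Adj u a} {hb : G.Adj u b} {p : G.Walk a x} {q : G.Walk b y}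
    (hp : (cons ha p).IsPath) (hq : (cons hb q).IsPath) (hcp : c ∈ p.support)
    (hcq : c ∈ q.support) : a = b := by
  classical
  rw [cons_isPath_iff] at hp hq
  have key := hG.eq_of_isPath (p := cons ha (p.takeUntil c hcp)) (q := cons hb (q.takeUntil c hcq))
    ((hp.1.takeUntil hcp).cons fun h ↦ hp.2 (p.support_takeUntil_subset_support hcp h))
    ((hq.1.takeUntil hcq).cons fun h ↦ hq.2 (q.support_takeUntil_subset_support hcq h))
  simpa using congrArg Walk.snd key

lemma IsTree.eq_of_adj_of_mem_support (hG : G.IsTree) {u x a b : V} {p : G.Walk u x}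
    (hp : p.IsPath) (ha : G.Adj u a) (hb : G.Adj u b) (ha' : a ∈ p.support)
    (hb' : b ∈ p.support) : a = b := by
  cases p with
  | nil => simp_all
  | cons h q =>
    have snd_eq : ∀ {c} (hc : G.Adj u c), c ∈ (cons h q).support → _ = c := fun hc hcp ↦
      hG.eq_of_mem_support_of_isPath_cons (hb := hc) (q := nil) hp (by simp [hc.ne])
        (by simpa [hc.ne'] using hcp) (start_mem_support _)
    exact (snd_eq ha ha').symm.trans (snd_eq hb hb')

lemma Walk.IsPath.penultimate_takeUntil_ne_snd_dropUntil [DecidableEq V] {u v c : V}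
    {p : G.Walk u v} (hp : p.IsPath) (hc : c ∈ p.support) (hcv : c ≠ v) :
    (p.takeUntil c hc).penultimate ≠ (p.dropUntil c hc).snd := by
  have hnd := hp.support_nodup
  rw [← p.take_spec hc, support_append, List.nodup_append] at hnd
  exact hnd.2.2 _ (getVert_mem_support _ _) _ (snd_mem_tail_support (not_nil_of_ne hcv))

variable [Finite V]

lemma Walk.IsPath.one_lt_vdeg_of_mem_support {u v c : V} {p : G.Walk u v} (hp : p.IsPath)
    (hc : c ∈ p.support) (hcu : c ≠ u) (hcv : c ≠ v) : 1 < vdeg G c := by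
  classical
  exact one_lt_vdeg_iff.2 ⟨_, _, (adj_penultimate (not_nil_of_ne hcu.symm)).symm,
    adj_snd (not_nil_of_ne hcv), hp.penultimate_takeUntil_ne_snd_dropUntil hc hcv⟩

lemma IsTree.exists_adj_notMem_support (hG : G.IsTree) {u c : V} {p : G.Walk u c}
    (hp : p.IsPath) (hc : 1 < vdeg G c) : ∃ a, G.Adj c a ∧ a ∉ p.support := by
  obtain ⟨a, b, ha, hb, hab⟩ := one_lt_vdeg_iff.1 hc
  by_contra! h
  exact hab (hG.eq_of_adj_of_mem_support hp.reverse ha hb (by simpa using h a ha)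
    (by simpa using h b hb))

lemma IsTree.exists_two_adj_notMem_support (hG : G.IsTree) {u c : V} {p : G.Walk u c}
    (hp : p.IsPath) (hc : 2 < vdeg G c) :
    ∃ a b, G.Adj c a ∧ G.Adj c b ∧ a ≠ b ∧ a ∉ p.support ∧ b ∉ p.support := by
  obtain ⟨a, b, e, ha, hb, he, hab, hae, hbe⟩ := two_lt_vdeg_iff.1 hc
  have eq_of_mem {x y : V} (hx : G.Adj c x) (hy : G.Adj c y) (hx' : x ∈ p.support)
      (hy' : y ∈ p.support) : x = y :=
    hG.eq_of_adj_of_mem_support hp.reverse hx hy (by simpa using hx') (by simpa using hy')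
  by_cases ha' : a ∈ p.support
  · exact ⟨b, e, hb, he, hbe, fun h ↦ hab (eq_of_mem ha hb ha' h),
      fun h ↦ hae (eq_of_mem ha he ha' h)⟩
  by_cases hb' : b ∈ p.support
  · exact ⟨a, e, ha, he, hae, ha', fun h ↦ hbe (eq_of_mem hb he hb' h)⟩
  exact ⟨a, b, ha, hb, hab, ha', hb'⟩

theorem IsTree.exists_leaf_isPath_append_cons [Fintype V] (hG : G.IsTree) {u c a : V}
    (p : G.Walk u c) (hp : p.IsPath) (h : G.Adj c a) (ha : a ∉ p.support) :
    ∃ x, ∃ q : G.Walk a x, (p.append (cons h q)).IsPath ∧ vdeg G x ≤ 1 ∧ x ≠ u := by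
  have hpa : (p.concat h).IsPath := hp.concat ha h
  by_cases hleaf : vdeg G a ≤ 1
  · exact ⟨a, nil, by simpa [← concat_eq_append] using hpa, hleaf,
      fun hau ↦ ha (hau ▸ p.start_mem_support)⟩
  obtain ⟨b, hb, hb'⟩ := hG.exists_adj_notMem_support hpa (not_le.1 hleaf)
  obtain ⟨x, q, hq, hx, hxu⟩ := hG.exists_leaf_isPath_append_cons (p.concat h) hpa hb hb'
  exact ⟨x, cons hb q, by simpa [concat_eq_append, ← append_assoc] using hq, hx, hxu⟩
termination_by Fintype.card V - p.length
decreasing_by have := hpa.length_lt; rw [length_concat] at *; omega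

lemma IsTree.exists_leaf_ne [Fintype V] (hG : G.IsTree) {r : V} (hr : 0 < vdeg G r) :
    ∃ x, vdeg G x ≤ 1 ∧ x ≠ r := by
  obtain ⟨a, ha⟩ := exists_adj_of_vdeg_pos hr
  obtain ⟨x, -, -, hx, hxr⟩ :=
    hG.exists_leaf_isPath_append_cons nil IsPath.nil ha (by simpa using ha.ne')
  exact ⟨x, hx, hxr⟩

end SimpleGraph

def IsPathWeightDist (G : SimpleGraph V) (w : Sym2 V → NNReal)
    (d : V → V → NNReal) : Prop :=
  ∀ u v, ∀ p : G.Walk u v, p.IsPath → d u v = (p.edges.map w).sum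

def IsMeet {G : SimpleGraph V} (d : V → V → NNReal) {r x y : V}
    (P : G.Walk r x) (Q : G.Walk r y) (u : V) : Prop :=
  u ∈ P.support ∧ u ∈ Q.support ∧ ∀ c ∈ P.support, c ∈ Q.support → d r c ≤ d r u

lemma exists_isMeet {G : SimpleGraph V} (d : V → V → NNReal) {r x y : V}
    (P : G.Walk r x) (Q : G.Walk r y) : ∃ u, IsMeet d P Q u := by
  classical
  obtain ⟨u, hu, hmax⟩ :=
    (P.support.toFinset ∩ Q.support.toFinset).exists_max_image (d r) ⟨r, by simp⟩
  simp only [Finset.mem_inter, List.mem_toFinset, and_imp] at hu hmax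
  exact ⟨u, hu.1, hu.2, hmax⟩

namespace IsPathWeightDist

variable {G : SimpleGraph V} {w : Sym2 V → NNReal} {d : V → V → NNReal}
  (hd : IsPathWeightDist G w d)
include hd

lemma self (u : V) : d u u = 0 := by
  simpa using hd u u nil IsPath.nil

lemma comm (hG : G.IsTree) (u v : V) : d u v = d v u := by
  obtain ⟨p, hp⟩ := (hG.existsUnique_path u v).exists
  rw [hd u v p hp, hd v u p.reverse hp.reverse, edges_reverse, List.map_reverse,
    List.sum_reverse]

lemma eq_zero_iff (hG : G.IsTree) (hpos : ∀ e ∈ G.edgeSet, 0 < w e) {u v : V} :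
    d u v = 0 ↔ u = v := by
  refine ⟨fun h ↦ ?_, fun h ↦ h ▸ hd.self u⟩
  by_contra huv
  obtain ⟨p, hp⟩ := (hG.existsUnique_path u v).exists
  obtain ⟨a, ha, q, rfl⟩ := exists_eq_cons_of_ne huv p
  rw [hd u v _ hp, edges_cons, List.map_cons, List.sum_cons, add_eq_zero] at h
  exact (hpos _ (G.mem_edgeSet.2 ha)).ne' h.1

lemma eq_add_of_isPath_append {u v x : V} {p : G.Walk u v} {q : G.Walk v x}
    (h : (p.append q).IsPath) : d u x = d u v + d v x := by
  rw [hd _ _ _ h, hd _ _ _ h.of_append_left, hd _ _ _ h.of_append_right, edges_append,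
    List.map_append, List.sum_append]

lemma eq_add_of_mem_support {u v c : V} {p : G.Walk u v} (hp : p.IsPath)
    (hc : c ∈ p.support) : d u v = d u c + d c v := by
  classical
  rw [← p.take_spec hc] at hp
  exact hd.eq_add_of_isPath_append hp

lemma eq_add_of_support_inter (hG : G.IsTree) {u x y : V} {p : G.Walk u x} {q : G.Walk u y}
    (hp : p.IsPath) (hq : q.IsPath) (h : ∀ c ∈ p.support, c ∈ q.support → c = u) :
    d x y = d u x + d u y := by
  have hq' := hq.support_nodup
  rw [← cons_tail_support, List.nodup_cons] at hq'
  have hpq : (p.reverse.append q).IsPath := by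
    rw [isPath_def, support_append, support_reverse, List.nodup_append, List.nodup_reverse]
    refine ⟨hp.support_nodup, hq'.2, fun c hc c' hc' hcc' ↦ ?_⟩
    subst hcc'
    rw [List.mem_reverse] at hc
    exact hq'.1 (h c hc (List.mem_of_mem_tail hc') ▸ hc')
  rw [hd.eq_add_of_isPath_append hpq, hd.comm hG x u]

lemma eq_add_of_mem_support_dropUntil [DecidableEq V] {r z a b : V} {R : G.Walk r z}
    (hR : R.IsPath) (hb : b ∈ R.support) (ha : a ∈ (R.dropUntil b hb).support) :
    d r a = d r b + d b a := by
  have h := hR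
  rw [← R.take_spec hb, ← (R.dropUntil b hb).take_spec ha, append_assoc] at h
  exact hd.eq_add_of_isPath_append h.of_append_left

lemma eq_of_mem_support_dropUntil_of_le [DecidableEq V] (hG : G.IsTree)
    (hpos : ∀ e ∈ G.edgeSet, 0 < w e) {r z a b : V} {R : G.Walk r z} (hR : R.IsPath)
    (hb : b ∈ R.support) (ha : a ∈ (R.dropUntil b hb).support) (hab : d r a ≤ d r b) :
    a = b := by
  rwa [hd.eq_add_of_mem_support_dropUntil hR hb ha, add_le_iff_nonpos_right,
    nonpos_iff_eq_zero, hd.eq_zero_iff hG hpos, eq_comm] at hab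

lemma mem_support_of_dist_le (hG : G.IsTree) (hpos : ∀ e ∈ G.edgeSet, 0 < w e)
    {r z t a b : V} {R : G.Walk r z} {W : G.Walk r t} (hR : R.IsPath) (hW : W.IsPath)
    (ha : a ∈ R.support) (hb : b ∈ R.support) (hbW : b ∈ W.support) (hab : d r a ≤ d r b) :
    a ∈ W.support := by
  classical
  rw [← R.take_spec hb, mem_support_append_iff] at ha
  rcases ha with ha | ha
  · rw [hG.eq_of_isPath (hR.takeUntil hb) (hW.takeUntil hbW)] at ha
    exact W.support_takeUntil_subset_support hbW ha
  · exact hd.eq_of_mem_support_dropUntil_of_le hG hpos hR hb ha hab ▸ hbW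

lemma eq_of_isMeet_of_mem_support_dropUntil [DecidableEq V] (hG : G.IsTree)
    (hpos : ∀ e ∈ G.edgeSet, 0 < w e) {r x y u c : V} {P : G.Walk r x} {Q : G.Walk r y}
    (hP : P.IsPath) (hu : IsMeet d P Q u) (hcP : c ∈ (P.dropUntil u hu.1).support)
    (hcQ : c ∈ (Q.dropUntil u hu.2.1).support) : c = u :=
  hd.eq_of_mem_support_dropUntil_of_le hG hpos hP hu.1 hcP
    (hu.2.2 c (P.support_dropUntil_subset_support hu.1 hcP)
      (Q.support_dropUntil_subset_support hu.2.1 hcQ))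

lemma dist_add_two_mul_of_isMeet (hG : G.IsTree) (hpos : ∀ e ∈ G.edgeSet, 0 < w e)
    {r x y u : V} {P : G.Walk r x} {Q : G.Walk r y} (hP : P.IsPath) (hQ : Q.IsPath)
    (hu : IsMeet d P Q u) : d x y + 2 * d r u = d r x + d r y := by
  classical
  have hxy := hd.eq_add_of_support_inter hG (hP.dropUntil hu.1) (hQ.dropUntil hu.2.1)
    fun _ ↦ hd.eq_of_isMeet_of_mem_support_dropUntil hG hpos hP hu
  rw [hxy, hd.eq_add_of_mem_support hP hu.1, hd.eq_add_of_mem_support hQ hu.2.1]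
  ring

/-- The meet has a parent (it is not the root, which is a leaf) and a child towards each of the
two leaves. -/
lemma two_le_outDeg_of_isMeet [Finite V] (hG : G.IsTree) (hpos : ∀ e ∈ G.edgeSet, 0 < w e)
    {r x y u : V} {P : G.Walk r x} {Q : G.Walk r y} (hP : P.IsPath) (hQ : Q.IsPath)
    (hu : IsMeet d P Q u) (hr : vdeg G r = 1) (hx : vdeg G x ≤ 1) (hy : vdeg G y ≤ 1)
    (hxr : x ≠ r) (hyr : y ≠ r) (hxy : x ≠ y) : 2 ≤ outDeg G r u := by
  classical
  have hur : u ≠ r := by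
    rintro rfl
    have hsnd : P.snd = Q.snd := eq_of_vdeg_le_one hr.le (adj_snd (not_nil_of_ne hxr.symm))
      (adj_snd (not_nil_of_ne hyr.symm))
    have := hu.2.2 P.snd (getVert_mem_support _ _) (hsnd ▸ getVert_mem_support _ _)
    rw [hd.self, nonpos_iff_eq_zero, hd.eq_zero_iff hG hpos] at this
    exact (adj_snd (not_nil_of_ne hxr.symm)).ne this
  have hux : u ≠ x := fun h ↦
    hx.not_gt (hQ.one_lt_vdeg_of_mem_support (h ▸ hu.2.1) (h ▸ hxr) (h ▸ hxy))
  have huy : u ≠ y := fun h ↦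
    hy.not_gt (hP.one_lt_vdeg_of_mem_support (h ▸ hu.1) (h ▸ hyr) (h ▸ hxy.symm))
  have hparent : P.takeUntil u hu.1 = Q.takeUntil u hu.2.1 :=
    hG.eq_of_isPath (hP.takeUntil _) (hQ.takeUntil _)
  have hchild : (P.dropUntil u hu.1).snd ≠ (Q.dropUntil u hu.2.1).snd := fun h ↦
    (adj_snd (not_nil_of_ne hux)).ne <| Eq.symm <| hd.eq_of_isMeet_of_mem_support_dropUntil
      hG hpos hP hu (getVert_mem_support _ _) (h ▸ getVert_mem_support _ _)
  have h3 : 2 < vdeg G u := two_lt_vdeg_iff.2 ⟨_, _, _,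
    (adj_penultimate (not_nil_of_ne hur.symm)).symm, adj_snd (not_nil_of_ne hux),
    adj_snd (not_nil_of_ne huy), hP.penultimate_takeUntil_ne_snd_dropUntil hu.1 hux,
    hparent ▸ hQ.penultimate_takeUntil_ne_snd_dropUntil hu.2.1 huy, hchild⟩
  exact (two_le_outDeg_iff hr).2 ⟨h3, hur⟩

lemma exists_two_le_outDeg_dist_add_two_mul [Finite V] (hG : G.IsTree)
    (hpos : ∀ e ∈ G.edgeSet, 0 < w e) {r x y : V} (hr : vdeg G r = 1) (hx : vdeg G x ≤ 1)
    (hy : vdeg G y ≤ 1) (hxr : x ≠ r) (hyr : y ≠ r) (hxy : x ≠ y) :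
    ∃ u, 2 ≤ outDeg G r u ∧ d x y + 2 * d r u = d r x + d r y := by
  obtain ⟨P, hP⟩ := (hG.existsUnique_path r x).exists
  obtain ⟨Q, hQ⟩ := (hG.existsUnique_path r y).exists
  obtain ⟨u, hu⟩ := exists_isMeet d P Q
  exact ⟨u, hd.two_le_outDeg_of_isMeet hG hpos hP hQ hu hr hx hy hxr hyr hxy,
    hd.dist_add_two_mul_of_isMeet hG hpos hP hQ hu⟩

lemma dist_le_max_of_dist_root_eq (hG : G.IsTree) (hpos : ∀ e ∈ G.edgeSet, 0 < w e)
    {r x y z : V} (hy : d r y = d r x) (hz : d r z = d r x) :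
    d x y ≤ max (d x z) (d z y) := by
  obtain ⟨P, hP⟩ := (hG.existsUnique_path r x).exists
  obtain ⟨Q, hQ⟩ := (hG.existsUnique_path r y).exists
  obtain ⟨R, hR⟩ := (hG.existsUnique_path r z).exists
  obtain ⟨u₁, hu₁⟩ := exists_isMeet d P Q
  obtain ⟨u₂, hu₂⟩ := exists_isMeet d P R
  obtain ⟨u₃, hu₃⟩ := exists_isMeet d R Q
  have e₁ := hd.dist_add_two_mul_of_isMeet hG hpos hP hQ hu₁
  have e₂ := hd.dist_add_two_mul_of_isMeet hG hpos hP hR hu₂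
  have e₃ := hd.dist_add_two_mul_of_isMeet hG hpos hR hQ hu₃
  rw [hy] at e₁ e₃
  rw [hz] at e₂ e₃
  rcases le_total (d r u₂) (d r u₃) with h | h
  · have h₂₁ : d r u₂ ≤ d r u₁ :=
      hu₁.2.2 _ hu₂.1 (hd.mem_support_of_dist_le hG hpos hR hQ hu₂.2.1 hu₃.1 hu₃.2.1 h)
    refine le_max_of_le_left (le_of_add_le_add_right (a := 2 * d r u₁) ?_)
    rw [e₁, ← e₂]
    gcongr
  · have h₃₁ : d r u₃ ≤ d r u₁ :=
      hu₁.2.2 _ (hd.mem_support_of_dist_le hG hpos hR hP hu₃.1 hu₂.2.1 hu₂.1 h) hu₃.2.1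
    refine le_max_of_le_right (le_of_add_le_add_right (a := 2 * d r u₁) ?_)
    rw [e₁, ← e₃]
    gcongr

lemma isUltrametricOn_iff (hG : G.IsTree) (hpos : ∀ e ∈ G.edgeSet, 0 < w e) {A : Set V}
    {r : V} (hr : r ∈ A) {K : NNReal} (hK : ∀ x ∈ A, x ≠ r → d r x = K) :
    IsUltrametricOn d A ↔ ∀ x ∈ A, ∀ y ∈ A, x ≠ r → y ≠ r → d x y ≤ K := by
  have hK' : ∀ x ∈ A, x ≠ r → d x r = K := fun x hx hxr ↦ (hd.comm hG x r).trans (hK x hx hxr)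
  refine ⟨fun h x hx y hy hxr hyr ↦ ?_, fun hle ↦ ?_⟩
  · simpa [hK' x hx hxr, hK y hy hyr] using h.2 x hx y hy r hr
  have strong : ∀ x ∈ A, ∀ y ∈ A, ∀ z ∈ A, d x y ≤ max (d x z) (d z y) := by
    intro x hx y hy z hz
    rcases eq_or_ne x y with rfl | hxy
    · simp [hd.self]
    rcases eq_or_ne z x with rfl | hzx
    · simp [hd.self]
    rcases eq_or_ne z y with rfl | hzy
    · simp [hd.self]
    by_cases hxr : x = r
    · subst hxr
      rw [hK y hy hxy.symm, ← hK z hz hzx]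
      exact le_max_left _ _
    by_cases hyr : y = r
    · subst hyr
      rw [hK' x hx hxr, ← hK' z hz hzy]
      exact le_max_right _ _
    by_cases hzr : z = r
    · subst hzr
      rw [hK' x hx hxr]
      exact le_max_of_le_left (hle x hx y hy hxr hyr)
    exact hd.dist_le_max_of_dist_root_eq hG hpos (r := r)
      ((hK y hy hyr).trans (hK x hx hxr).symm) ((hK z hz hzr).trans (hK x hx hxr).symm)
  exact ⟨⟨fun x _ y _ ↦ hd.eq_zero_iff hG hpos, fun x _ y _ ↦ hd.comm hG x y,
    fun x hx y hy z hz ↦ (strong x hx y hy z hz).trans (max_le le_self_add le_add_self)⟩, strong⟩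

lemma exists_leaves_dist_add_two_mul [Fintype V] (hG : G.IsTree) {r v : V}
    (hv : 2 < vdeg G v) :
    ∃ x y, vdeg G x ≤ 1 ∧ vdeg G y ≤ 1 ∧ x ≠ r ∧ y ≠ r ∧
      d x y + 2 * d r v = d r x + d r y := by
  obtain ⟨p, hp⟩ := (hG.existsUnique_path r v).exists
  obtain ⟨a, b, ha, hb, hab, ha', hb'⟩ := hG.exists_two_adj_notMem_support hp hv
  obtain ⟨x, q, hq, hx, hxr⟩ := hG.exists_leaf_isPath_append_cons p hp ha ha'
  obtain ⟨y, q', hq', hy, hyr⟩ := hG.exists_leaf_isPath_append_cons p hp hb hb'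
  have hxy : d x y = d v x + d v y :=
    hd.eq_add_of_support_inter hG hq.of_append_right hq'.of_append_right fun c hc hc' ↦ by
      by_contra hcv
      exact hab (hG.eq_of_mem_support_of_isPath_cons hq.of_append_right hq'.of_append_right
        (by simpa [hcv] using hc) (by simpa [hcv] using hc'))
  refine ⟨x, y, hx, hy, hxr, hyr, ?_⟩
  rw [hxy, hd.eq_add_of_isPath_append hq, hd.eq_add_of_isPath_append hq']
  ring

end IsPathWeightDist

lemma EquidistantWeight.exists_dist_root_eq {G : SimpleGraph V} {r : V} {w : Sym2 V → NNReal}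
    {d : V → V → NNReal} (hw : EquidistantWeight G r w) (hG : G.IsTree)
    (hd : IsPathWeightDist G w d) (hr : vdeg G r = 1) :
    ∃ K, ∀ x ∈ {v | vdeg G v ≤ 1}, x ≠ r → d r x = K := by
  obtain ⟨-, K, hK⟩ := hw
  refine ⟨K, fun x hx hxr ↦ ?_⟩
  obtain ⟨p, hp⟩ := (hG.existsUnique_path r x).exists
  rw [hd r x p hp]
  exact hK x ((outDeg_eq_zero_iff hr).2 ⟨hx, hxr⟩) p hp

lemma le_iff_le_of_add_eq_add_self {α : Type*} [AddCommMonoid α] [PartialOrder α]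
    [IsOrderedCancelAddMonoid α] {a b c : α} (h : a + b = c + c) : a ≤ c ↔ c ≤ b := by
  rw [← add_le_add_iff_right b, h, add_le_add_iff_left]

lemma exists_eq_sInf {α : Type*} [Finite α] (P : α → Prop) (f : α → NNReal) (h : ∃ a, P a) :
    ∃ a, P a ∧ (∀ b, P b → f a ≤ f b) ∧ sInf {x | ∃ b, P b ∧ x = f b} = f a := by
  obtain ⟨a, ha, hmin⟩ := Set.exists_min_image {a | P a} f (Set.toFinite _) h
  exact ⟨a, ha, hmin, IsLeast.csInf_eq ⟨⟨a, ha, rfl⟩, by rintro _ ⟨b, hb, rfl⟩; exact hmin b hb⟩⟩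

/-- Let `T(r, w)` be planted and equidistant with
`V₂⁺⁺(T) = {v : δ⁺(v) ≥ 2}` nonempty, and `L` the set of leaves of `T`. Then `d_w`
restricted to `L` is an ultrametric iff
`2 · dist(r, V₂⁺⁺(T)) ≥ dist(r, V₀⁺(T))`. -/
theorem stmt17_ultrametric_on_leaves_iff_dist_ineq
    {V : Type*} [Fintype V] (G : SimpleGraph V) (hG : G.IsTree) (r : V)
    (hplanted : outDeg G r r = 1)
    (w : Sym2 V → NNReal) (hw : EquidistantWeight G r w)
    (hV2 : {v : V | 2 ≤ outDeg G r v}.Nonempty)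
    (d : V → V → NNReal)
    (hd : ∀ u v, ∀ p : G.Walk u v, p.IsPath → d u v = (p.edges.map w).sum) :
    IsUltrametricOn d {v | vdeg G v ≤ 1} ↔
      sInf {x : NNReal | ∃ a, outDeg G r a = 0 ∧ x = d r a} ≤
        2 * sInf {x : NNReal | ∃ a, 2 ≤ outDeg G r a ∧ x = d r a} := by
  replace hd : IsPathWeightDist G w d := hd
  have hr : vdeg G r = 1 := by rwa [outDeg_self] at hplanted
  obtain ⟨K, hK⟩ := hw.exists_dist_root_eq hG hd hr
  obtain ⟨x₁, hx₁⟩ := hG.exists_leaf_ne (r := r) (by omega)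
  obtain ⟨x₀, hx₀, -, hK₀⟩ :=
    exists_eq_sInf (outDeg G r · = 0) (d r) ⟨x₁, (outDeg_eq_zero_iff hr).2 hx₁⟩
  obtain ⟨v₀, hv₀, hmin, hm⟩ := exists_eq_sInf (2 ≤ outDeg G r ·) (d r) hV2
  rw [outDeg_eq_zero_iff hr] at hx₀
  rw [hK₀, hm, hK x₀ hx₀.1 hx₀.2, hd.isUltrametricOn_iff hG hw.1 (by simp [hr]) hK]
  constructor
  · intro h
    obtain ⟨x, y, hx, hy, hxr, hyr, e⟩ :=
      hd.exists_leaves_dist_add_two_mul hG (r := r) ((two_le_outDeg_iff hr).1 hv₀).1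
    rw [hK x hx hxr, hK y hy hyr] at e
    exact (le_iff_le_of_add_eq_add_self e).1 (h x hx y hy hxr hyr)
  · intro h x hx y hy hxr hyr
    rcases eq_or_ne x y with rfl | hxy
    · simp [hd.self]
    obtain ⟨u, hu, e⟩ := hd.exists_two_le_outDeg_dist_add_two_mul hG hw.1 hr hx hy hxr hyr hxy
    rw [hK x hx hxr, hK y hy hyr] at e
    exact (le_iff_le_of_add_eq_add_self e).2 (h.trans (by gcongr; exact hmin u hu))
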